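/- Let P be a register protocol with initial value d0 and target qf, and suppose Post*(↑{⟨q0, d0⟩}) = ↑{θ_1, …, θ_n} and Pre*([qf]) = ↑{η_1, …, η_m} for finite families of configurations (θ_i) and (η_j). Then Post*(↑{⟨q0, d0⟩}) is included in Pre*([qf]) modulo single-state incrementation if, and only if, for every i ∈ [1; n] and every q in the support of θ_i, there exists j ∈ [1; m] such that data(θ_i) = data(η_j), the supports of st(θ_i) and st(η_j) are equal, and st(η_j)(q') ≤ st(θ_i)(q') for every q' ∈ Q \ {q}. -/

import Mathlib

/-- Operation type of a register protocol: read or write. -/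
inductive Op : Type
  | R : Op
  | W : Op
deriving DecidableEq

instance instFintypeOp : Fintype Op :=
  ⟨{Op.R, Op.W}, fun x => by cases x <;> simp⟩

/-- A location has at least one outgoing transition. -/
def Nonblock {Q D : Type*} (T : Set (Q × Op × D × Q)) : Prop :=
  ∀ q : Q, ∃ op d q', (q, op, d, q') ∈ T

/-- Whenever a read transition exists from `q`, reads of every datum are enabled in `q`. -/
def ReadTotal {Q D : Type*} (T : Set (Q × Op × D × Q)) : Prop :=
  ∀ q d' q', (q, Op.R, d', q') ∈ T → ∀ d : D, ∃ qd, (q, Op.R, d, qd) ∈ T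

/-- One step of the distributed system associated with transition set `T`:
a configuration is a pair of a finite multiset of locations and a register datum. -/
def IsStep {Q D : Type*} [DecidableEq Q] (T : Set (Q × Op × D × Q)) :
    Multiset Q × D → Multiset Q × D → Prop := fun γ γ' =>
  ∃ q op d'' q', (q, op, d'', q') ∈ T ∧ q ∈ γ.1 ∧
    γ'.1 = γ.1 - {q} + {q'} ∧
    ((op = Op.R ∧ γ.2 = d'' ∧ γ'.2 = d'') ∨ (op = Op.W ∧ γ'.2 = d''))

/-- Reachability: reflexive-transitive closure of the step relation. -/
def Reach {Q D : Type*} [DecidableEq Q] (T : Set (Q × Op × D × Q)) :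
    Multiset Q × D → Multiset Q × D → Prop :=
  Relation.ReflTransGen (IsStep T)

/-- `PostStar T S` is the set of configurations reachable from some configuration of `S`. -/
def PostStar {Q D : Type*} [DecidableEq Q] (T : Set (Q × Op × D × Q))
    (S : Set (Multiset Q × D)) : Set (Multiset Q × D) :=
  {γ' | ∃ γ ∈ S, Reach T γ γ'}

/-- `PreStar T S` is the set of configurations from which some configuration of `S`
is reachable. -/
def PreStar {Q D : Type*} [DecidableEq Q] (T : Set (Q × Op × D × Q))
    (S : Set (Multiset Q × D)) : Set (Multiset Q × D) :=
  {γ | ∃ γ' ∈ S, Reach T γ γ'}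

/-- `[qf]`: configurations containing at least one process in location `qf`. -/
def TargetSet {Q D : Type*} [DecidableEq Q] (qf : Q) : Set (Multiset Q × D) :=
  {γ | 0 < γ.1.count qf}

/-- The order `⪯` on configurations: same register content, same support,
and componentwise smaller multiset. -/
def ConfLE {Q D : Type*} [DecidableEq Q] (γ γ' : Multiset Q × D) : Prop :=
  γ.2 = γ'.2 ∧ γ.1.toFinset = γ'.1.toFinset ∧ γ.1 ≤ γ'.1

/-- Upward closure of a set of configurations with respect to `⪯`. -/
def UpSet {Q D : Type*} [DecidableEq Q] (B : Set (Multiset Q × D)) :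
    Set (Multiset Q × D) :=
  {γ' | ∃ γ ∈ B, ConfLE γ γ'}

/-- `Δ` is included in `Δ'` modulo single-state incrementation. -/
def IncModSSI {Q D : Type*} [DecidableEq Q] (Δ Δ' : Set (Multiset Q × D)) : Prop :=
  ∀ γ ∈ Δ, ∀ q ∈ γ.1.toFinset, ∃ k : ℕ, (γ.1 + Multiset.replicate k q, γ.2) ∈ Δ'

/-
Both sets are upward closures of their bases, and `γ ↦ ∃ k, γ + q^k ∈ ↑{η_j}` is monotone for `⪯`,
so the inclusion only has to be checked on the minimal elements `θ_i`. For a fixed `θ_i` and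
`q`, some `θ_i + q^k` dominates `η_j` exactly when `η_j` is dominated by `θ_i` away from `q`
(take `k = st(η_j)(q)`), and adding copies of `q` does not change the support of `θ_i`.
-/

namespace Multiset

variable {α : Type*} [DecidableEq α]

theorem toFinset_add_replicate_of_mem {s : Multiset α} {a : α} (ha : a ∈ s) (k : ℕ) :
    (s + replicate k a).toFinset = s.toFinset := by
  ext x
  simp only [mem_toFinset, mem_add, mem_replicate]
  aesop

theorem exists_le_add_replicate_iff {s t : Multiset α} {a : α} :
    (∃ k, t ≤ s + replicate k a) ↔ ∀ b, b ≠ a → t.count b ≤ s.count b := by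
  constructor
  · rintro ⟨k, hk⟩ b hb
    simpa [count_replicate, Ne.symm hb] using le_iff_count.mp hk b
  · intro h
    refine ⟨t.count a, le_iff_count.mpr fun b => ?_⟩
    rw [count_add, count_replicate]
    by_cases hb : b = a
    · subst hb
      simp
    · simpa [Ne.symm hb] using h b hb

end Multiset

section Configurations

variable {Q D : Type*} [DecidableEq Q]

theorem ConfLE.refl (γ : Multiset Q × D) : ConfLE γ γ :=
  ⟨rfl, rfl, le_rfl⟩

theorem exists_confLE_add_replicate_iff {η γ : Multiset Q × D} {q : Q} (hq : q ∈ γ.1) :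
    (∃ k, ConfLE η (γ.1 + Multiset.replicate k q, γ.2)) ↔
      η.2 = γ.2 ∧ η.1.toFinset = γ.1.toFinset ∧ ∀ q', q' ≠ q → η.1.count q' ≤ γ.1.count q' := by
  simp only [ConfLE, Multiset.toFinset_add_replicate_of_mem hq, exists_and_left,
    Multiset.exists_le_add_replicate_iff]

theorem incModSSI_upSet_iff (B B' : Set (Multiset Q × D)) :
    IncModSSI (UpSet B) (UpSet B') ↔
      ∀ θ ∈ B, ∀ q ∈ θ.1.toFinset, ∃ η ∈ B',
        θ.2 = η.2 ∧ θ.1.toFinset = η.1.toFinset ∧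
        ∀ q', q' ≠ q → η.1.count q' ≤ θ.1.count q' := by
  constructor
  · intro h θ hθ q hq
    obtain ⟨k, η, hη, hle⟩ := h θ ⟨θ, hθ, ConfLE.refl θ⟩ q hq
    obtain ⟨hdata, hsupp, hcount⟩ :=
      (exists_confLE_add_replicate_iff (Multiset.mem_toFinset.mp hq)).mp ⟨k, hle⟩
    exact ⟨η, hη, hdata.symm, hsupp.symm, hcount⟩
  · rintro h γ ⟨θ, hθ, hdata, hsupp, hle⟩ q hq
    obtain ⟨η, hη, hdata', hsupp', hcount⟩ := h θ hθ q (hsupp ▸ hq)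
    obtain ⟨k, hk⟩ := (exists_confLE_add_replicate_iff (Multiset.mem_toFinset.mp hq)).mpr
      ⟨hdata'.symm.trans hdata, hsupp'.symm.trans hsupp,
        fun q' hq' => (hcount q' hq').trans (Multiset.le_iff_count.mp hle q')⟩
    exact ⟨k, η, hη, hk⟩

end Configurations

theorem stmt_6_general {Q D : Type*} [DecidableEq Q]
    (T : Set (Q × Op × D × Q))
    (q0 qf : Q) (d0 : D) (n m : ℕ)
    (θ : Fin n → Multiset Q × D) (η : Fin m → Multiset Q × D)
    (hpost : PostStar T (UpSet {(({q0} : Multiset Q), d0)}) = UpSet (Set.range θ))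
    (hpre : PreStar T (TargetSet qf) = UpSet (Set.range η)) :
    IncModSSI (PostStar T (UpSet {(({q0} : Multiset Q), d0)}))
        (PreStar T (TargetSet qf)) ↔
      ∀ i : Fin n, ∀ q ∈ (θ i).1.toFinset, ∃ j : Fin m,
        (θ i).2 = (η j).2 ∧ (θ i).1.toFinset = (η j).1.toFinset ∧
        ∀ q' : Q, q' ≠ q → (η j).1.count q' ≤ (θ i).1.count q' := by
  rw [hpost, hpre, incModSSI_upSet_iff]
  simp only [Set.forall_mem_range, Set.exists_range_iff]

/-- characterization of inclusion modulo single-state incrementation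
of `Post*(↑{⟨q0,d0⟩}) = ↑{θ_1,…,θ_n}` in `Pre*([qf]) = ↑{η_1,…,η_m}` via the
minimal elements. -/
theorem stmt_6 {Q D : Type*} [DecidableEq Q]
    (T : Set (Q × Op × D × Q)) (hnb : Nonblock T) (hrt : ReadTotal T)
    (q0 qf : Q) (d0 : D) (n m : ℕ)
    (θ : Fin n → Multiset Q × D) (η : Fin m → Multiset Q × D)
    (hpost : PostStar T (UpSet {(({q0} : Multiset Q), d0)}) = UpSet (Set.range θ))
    (hpre : PreStar T (TargetSet qf) = UpSet (Set.range η)) :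
    IncModSSI (PostStar T (UpSet {(({q0} : Multiset Q), d0)}))
        (PreStar T (TargetSet qf)) ↔
      ∀ i : Fin n, ∀ q ∈ (θ i).1.toFinset, ∃ j : Fin m,
        (θ i).2 = (η j).2 ∧ (θ i).1.toFinset = (η j).1.toFinset ∧
        ∀ q' : Q, q' ≠ q → (η j).1.count q' ≤ (θ i).1.count q' :=
  stmt_6_general T q0 qf d0 n m θ η hpost hpre
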